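/- Let (ε_k) in ℝᵖ satisfy ε_k = E_k ε_{k−1} − E_k(Δν_k + c_k) + δ_k + c_k + d_k with ‖E_k‖ ≤ b̄' < 1, ‖Δν_k‖ ≤ Δν̄, ‖c_k‖ ≤ c̄, ‖δ_k + d_k‖ ≤ δ̄ + d̄ for all k. Then (ε_k) is bounded and limsup_k ‖ε_k‖ ≤ (Δν̄·b̄' + δ̄ + d̄ + (b̄' + 1)·c̄)/(1 − b̄'). -/

import Mathlib

/-!
Taking norms in the recursion and using `‖E_k‖ ≤ b̄' < 1` gives the scalar inequality
`‖ε_{k+1}‖ ≤ b̄' ‖ε_k‖ + B` with `B = Δν̄ b̄' + δ̄ + d̄ + (b̄' + 1) c̄`. Its fixed point is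
`S = B / (1 - b̄')`, and the excess over `S` contracts: `‖ε_k‖ - S ≤ b̄'^k (‖ε_0‖ - S)`. The right-hand
side plus `S` converges to `S`, so it bounds `‖ε_k‖` uniformly and its limit bounds the limsup.
-/

open Matrix Filter

/-- Operator 2-norm of a real matrix, viewed as a linear map between Euclidean spaces. -/
noncomputable def opNorm {p m : ℕ} (M : Matrix (Fin p) (Fin m) ℝ) : ℝ :=
  ‖LinearMap.toContinuousLinearMap (Matrix.toEuclideanLin M)‖

/-- A matrix acting on Euclidean space. -/
noncomputable def mulVecE {p m : ℕ} (M : Matrix (Fin p) (Fin m) ℝ)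
    (x : EuclideanSpace ℝ (Fin m)) : EuclideanSpace ℝ (Fin p) :=
  (WithLp.equiv 2 (Fin p → ℝ)).symm (M.mulVec (WithLp.equiv 2 (Fin m → ℝ) x))

section AffineRecurrence

variable {u : ℕ → ℝ} {b B : ℝ}

theorem sub_le_pow_mul_of_le_mul_add (hb0 : 0 ≤ b) (hb1 : b ≠ 1)
    (h : ∀ k, u (k + 1) ≤ b * u k + B) (k : ℕ) :
    u k - B / (1 - b) ≤ b ^ k * (u 0 - B / (1 - b)) := by
  induction k with
  | zero => simp
  | succ k ih =>
    have hfix : b * (B / (1 - b)) + B = B / (1 - b) := by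
      field_simp [sub_ne_zero.mpr hb1.symm]
      ring
    calc u (k + 1) - B / (1 - b) ≤ b * (u k - B / (1 - b)) := by linarith [h k]
      _ ≤ b * (b ^ k * (u 0 - B / (1 - b))) := mul_le_mul_of_nonneg_left ih hb0
      _ = b ^ (k + 1) * (u 0 - B / (1 - b)) := by ring

theorem tendsto_pow_mul_sub_add (hb0 : 0 ≤ b) (hb1 : b < 1) (a S : ℝ) :
    Tendsto (fun k : ℕ => b ^ k * (a - S) + S) atTop (nhds S) := by
  simpa using ((tendsto_pow_atTop_nhds_zero_of_lt_one hb0 hb1).mul_const (a - S)).add_const S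

theorem exists_forall_le_of_le_mul_add (hb0 : 0 ≤ b) (hb1 : b < 1)
    (h : ∀ k, u (k + 1) ≤ b * u k + B) : ∃ M, ∀ k, u k ≤ M := by
  obtain ⟨M, hM⟩ := (tendsto_pow_mul_sub_add hb0 hb1 (u 0) (B / (1 - b))).bddAbove_range
  exact ⟨M, fun k =>
    (sub_le_iff_le_add.mp (sub_le_pow_mul_of_le_mul_add hb0 hb1.ne h k)).trans
      (hM ⟨k, rfl⟩)⟩

theorem limsup_le_of_le_mul_add (hb0 : 0 ≤ b) (hb1 : b < 1)
    (h : ∀ k, u (k + 1) ≤ b * u k + B) (hu : IsBoundedUnder (· ≥ ·) atTop u) :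
    limsup u atTop ≤ B / (1 - b) := by
  have hv := tendsto_pow_mul_sub_add hb0 hb1 (u 0) (B / (1 - b))
  calc limsup u atTop
      ≤ limsup (fun k : ℕ => b ^ k * (u 0 - B / (1 - b)) + B / (1 - b)) atTop :=
        limsup_le_limsup
          (Eventually.of_forall fun k =>
            sub_le_iff_le_add.mp (sub_le_pow_mul_of_le_mul_add hb0 hb1.ne h k))
          hu.isCoboundedUnder_le hv.isBoundedUnder_le
    _ = B / (1 - b) := hv.limsup_eq

end AffineRecurrence

theorem norm_mulVecE_le {p m : ℕ} (M : Matrix (Fin p) (Fin m) ℝ)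
    (x : EuclideanSpace ℝ (Fin m)) : ‖mulVecE M x‖ ≤ opNorm M * ‖x‖ :=
  (LinearMap.toContinuousLinearMap (Matrix.toEuclideanLin M)).le_opNorm x

theorem norm_residual_update_le {p : ℕ} (e Δν c δ d : EuclideanSpace ℝ (Fin p))
    (E : Matrix (Fin p) (Fin p) ℝ) {b Δνbar cbar δbar dbar : ℝ} (hE : opNorm E ≤ b)
    (hΔν : ‖Δν‖ ≤ Δνbar) (hc : ‖c‖ ≤ cbar) (hδd : ‖δ + d‖ ≤ δbar + dbar) :
    ‖mulVecE E e - mulVecE E (Δν + c) + δ + c + d‖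
      ≤ b * ‖e‖ + (Δνbar * b + δbar + dbar + (b + 1) * cbar) := by
  have hb0 : 0 ≤ b := (norm_nonneg _).trans hE
  have hEe : ‖mulVecE E e‖ ≤ b * ‖e‖ :=
    (norm_mulVecE_le E e).trans (mul_le_mul_of_nonneg_right hE (norm_nonneg _))
  have hEΔνc : ‖mulVecE E (Δν + c)‖ ≤ b * (Δνbar + cbar) :=
    (norm_mulVecE_le E _).trans
      (mul_le_mul hE ((norm_add_le _ _).trans (add_le_add hΔν hc)) (norm_nonneg _) hb0)
  calc ‖mulVecE E e - mulVecE E (Δν + c) + δ + c + d‖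
      = ‖mulVecE E e - mulVecE E (Δν + c) + (δ + d) + c‖ := by congr 1; abel
    _ ≤ ‖mulVecE E e‖ + ‖mulVecE E (Δν + c)‖ + ‖δ + d‖ + ‖c‖ := by
        grw [norm_add_le, norm_add_le, norm_sub_le]
    _ ≤ b * ‖e‖ + b * (Δνbar + cbar) + (δbar + dbar) + cbar := by gcongr
    _ = b * ‖e‖ + (Δνbar * b + δbar + dbar + (b + 1) * cbar) := by ring

theorem qp_allocation_residual_bound
    {p : ℕ} (ε Δν c δ d : ℕ → EuclideanSpace ℝ (Fin p))
    (E : ℕ → Matrix (Fin p) (Fin p) ℝ)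
    (bbar Δνbar cbar δbar dbar : ℝ) (hb : bbar < 1)
    (hE : ∀ k : ℕ, opNorm (E (k + 1)) ≤ bbar)
    (hΔν : ∀ k : ℕ, ‖Δν (k + 1)‖ ≤ Δνbar)
    (hc : ∀ k : ℕ, ‖c (k + 1)‖ ≤ cbar)
    (hδd : ∀ k : ℕ, ‖δ (k + 1) + d (k + 1)‖ ≤ δbar + dbar)
    (hrec : ∀ k : ℕ, ε (k + 1)
      = mulVecE (E (k + 1)) (ε k) - mulVecE (E (k + 1)) (Δν (k + 1) + c (k + 1))
        + δ (k + 1) + c (k + 1) + d (k + 1)) :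
    (∃ M : ℝ, ∀ k : ℕ, ‖ε k‖ ≤ M) ∧
    limsup (fun k => ‖ε k‖) atTop
      ≤ (Δνbar * bbar + δbar + dbar + (bbar + 1) * cbar) / (1 - bbar) := by
  have hb0 : 0 ≤ bbar := (norm_nonneg _).trans (hE 0)
  have hstep : ∀ k, ‖ε (k + 1)‖
      ≤ bbar * ‖ε k‖ + (Δνbar * bbar + δbar + dbar + (bbar + 1) * cbar) := fun k => by
    rw [hrec k]
    exact norm_residual_update_le _ _ _ _ _ _ (hE k) (hΔν k) (hc k) (hδd k)
  exact ⟨exists_forall_le_of_le_mul_add hb0 hb hstep,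
    limsup_le_of_le_mul_add hb0 hb hstep (isBoundedUnder_of ⟨0, fun k => norm_nonneg _⟩)⟩
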